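/- arXiv:math/9507220 — 4 statements merged into one kernel-verified Lean document; each statement's English description precedes it below -/
import Mathlib

section
/- Dodgson's condensation rule: For any n×n matrix A (n ≥ 2) over a field, if the central (n-2)×(n-2) minor (the determinant of the submatrix obtained by deleting the first and last rows and columns) is nonzero, then det(A) times that central minor equals det(A₁₁)·det(A₂₂) − det(A₁₂)·det(A₂₁), where Aᵢⱼ denotes the (n-1)×(n-1) submatrix of A whose upper-left corner is the (i,j) entry (i.e., A₁₁ deletes the last row and column, A₂₂ deletes the first row and column, A₁₂ deletes the last row and first column, A₂₁ deletes the first row and last column). -/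
/-!
Dodgson condensation is Jacobi's complementary-minor theorem for a `2 × 2` minor of the adjugate.
Reorder the indices so that the first and last come first. Multiplying `A` by the matrix made of the
two corresponding columns of `adj A` and the identity elsewhere gives a block-triangular matrix with
diagonal blocks `det A • 1` and the interior block of `A`. Taking determinants and cancelling one
factor `det A`, which is legitimate for the generic matrix over `ℤ[Xᵢⱼ]`, shows that the
`2 × 2` minor of `adj A` equals `det A` times the interior minor. The four entries of that minor are
the cofactors of the corners, i.e. the four `(n + 1) × (n + 1)` corner minors up to signs that cancel.
-/

open Matrix

namespace Matrix

variable {l m R : Type*} [Fintype l] [Fintype m] [DecidableEq l] [DecidableEq m] [CommRing R]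

theorem mul_fromBlocks_adjugate_toBlocks (A : Matrix (l ⊕ m) (l ⊕ m) R) :
    A * fromBlocks (adjugate A).toBlocks₁₁ 0 (adjugate A).toBlocks₂₁ 1 =
      fromBlocks (A.det • 1) A.toBlocks₁₂ 0 A.toBlocks₂₂ := by
  have h := mul_adjugate A
  generalize adjugate A = B at h ⊢
  generalize A.det = d at h ⊢
  rw [← fromBlocks_toBlocks A, ← fromBlocks_toBlocks B, fromBlocks_multiply,
    ← fromBlocks_one, fromBlocks_smul, fromBlocks_inj] at h
  rw [← fromBlocks_toBlocks A, fromBlocks_multiply]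
  simp [h.1, h.2.2.1]

theorem det_mul_det_toBlocks₁₁_adjugate (A : Matrix (l ⊕ m) (l ⊕ m) R) :
    A.det * (adjugate A).toBlocks₁₁.det = A.det ^ Fintype.card l * A.toBlocks₂₂.det := by
  simpa [det_fromBlocks_zero₁₂, det_fromBlocks_zero₂₁] using
    congrArg det (mul_fromBlocks_adjugate_toBlocks A)

theorem det_toBlocks₁₁_adjugate [Nonempty l] (A : Matrix (l ⊕ m) (l ⊕ m) R) :
    (adjugate A).toBlocks₁₁.det = A.det ^ (Fintype.card l - 1) * A.toBlocks₂₂.det := by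
  let X := mvPolynomialX (l ⊕ m) (l ⊕ m) ℤ
  suffices (adjugate X).toBlocks₁₁.det = X.det ^ (Fintype.card l - 1) * X.toBlocks₂₂.det by
    let φ := MvPolynomial.aeval (R := ℤ) fun p : (l ⊕ m) × (l ⊕ m) ↦ A p.1 p.2
    rw [← mvPolynomialX_mapMatrix_aeval ℤ A, ← AlgHom.map_adjugate]
    change ((adjugate X).toBlocks₁₁.map φ).det = (X.map φ).det ^ _ * (X.toBlocks₂₂.map φ).det
    simp only [← AlgHom.mapMatrix_apply, ← AlgHom.map_det, this, map_mul, map_pow]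
  apply mul_left_cancel₀ (det_mvPolynomialX_ne_zero (l ⊕ m) ℤ)
  rw [det_mul_det_toBlocks₁₁_adjugate, ← mul_assoc, ← pow_succ',
    Nat.sub_add_cancel Fintype.card_pos]

section Fin

variable {k : ℕ} (A : Matrix (Fin (k + 1)) (Fin (k + 1)) R)

theorem adjugate_fin_succ_zero_zero : adjugate A 0 0 = (A.submatrix Fin.succ Fin.succ).det := by
  simp [adjugate_fin_succ_eq_det_submatrix]

theorem adjugate_fin_succ_last_last :
    adjugate A (Fin.last k) (Fin.last k) = (A.submatrix Fin.castSucc Fin.castSucc).det := by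
  simp [adjugate_fin_succ_eq_det_submatrix, ← two_mul]

theorem adjugate_fin_succ_zero_last :
    adjugate A 0 (Fin.last k) = (-1) ^ k * (A.submatrix Fin.castSucc Fin.succ).det := by
  simp [adjugate_fin_succ_eq_det_submatrix]

theorem adjugate_fin_succ_last_zero :
    adjugate A (Fin.last k) 0 = (-1) ^ k * (A.submatrix Fin.succ Fin.castSucc).det := by
  simp [adjugate_fin_succ_eq_det_submatrix]

end Fin

end Matrix

noncomputable def finEndsSumInteriorEquiv (n : ℕ) : Fin 2 ⊕ Fin n ≃ Fin (n + 2) :=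
  Equiv.ofBijective (Sum.elim ![0, Fin.last (n + 1)] fun i ↦ i.succ.castSucc) <|
    (Fintype.bijective_iff_injective_and_card _).2 ⟨by
      refine Function.Injective.sumElim ?_
        ((Fin.castSucc_injective _).comp (Fin.succ_injective _)) ?_
      · intro a b h
        fin_cases a <;> fin_cases b <;> simp_all [Fin.ext_iff]
      · intro a i
        fin_cases a
        · simp [Fin.ext_iff]
        · simp [Fin.ext_iff]
          omega,
      by simp [add_comm]⟩

theorem dodgson_condensation_field_general {K : Type*} [Field K] (n : ℕ)
    (A : Matrix (Fin (n + 2)) (Fin (n + 2)) K) :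
    A.det * (A.submatrix (fun i : Fin n => i.succ.castSucc)
        (fun j : Fin n => j.succ.castSucc)).det =
      (A.submatrix (Fin.castSucc : Fin (n + 1) → Fin (n + 2)) Fin.castSucc).det *
        (A.submatrix (Fin.succ : Fin (n + 1) → Fin (n + 2)) Fin.succ).det -
      (A.submatrix (Fin.castSucc : Fin (n + 1) → Fin (n + 2)) Fin.succ).det *
        (A.submatrix (Fin.succ : Fin (n + 1) → Fin (n + 2)) Fin.castSucc).det := by
  let e := finEndsSumInteriorEquiv n
  have hJacobi := det_toBlocks₁₁_adjugate (A.submatrix e e)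
  rw [adjugate_submatrix_equiv_self, det_fin_two, det_submatrix_equiv_self] at hJacobi
  change adjugate A 0 0 * adjugate A (Fin.last (n + 1)) (Fin.last (n + 1)) -
      adjugate A 0 (Fin.last (n + 1)) * adjugate A (Fin.last (n + 1)) 0 =
    A.det ^ 1 * (A.submatrix (fun i : Fin n => i.succ.castSucc)
      (fun j : Fin n => j.succ.castSucc)).det at hJacobi
  rw [adjugate_fin_succ_zero_zero, adjugate_fin_succ_last_last, adjugate_fin_succ_zero_last,
    adjugate_fin_succ_last_zero] at hJacobi
  have hsign : ((-1 : K) ^ (n + 1)) ^ 2 = 1 := by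
    rw [← pow_mul, mul_comm, pow_mul, neg_one_sq, one_pow]
  linear_combination -hJacobi - (A.submatrix Fin.castSucc Fin.succ).det *
    (A.submatrix Fin.succ Fin.castSucc).det * hsign

theorem dodgson_condensation_field {K : Type*} [Field K] (n : ℕ)
    (A : Matrix (Fin (n + 2)) (Fin (n + 2)) K)
    (h : (A.submatrix (fun i : Fin n => i.succ.castSucc)
          (fun j : Fin n => j.succ.castSucc)).det ≠ 0) :
    A.det * (A.submatrix (fun i : Fin n => i.succ.castSucc)
        (fun j : Fin n => j.succ.castSucc)).det =
      (A.submatrix (Fin.castSucc : Fin (n + 1) → Fin (n + 2)) Fin.castSucc).det *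
        (A.submatrix (Fin.succ : Fin (n + 1) → Fin (n + 2)) Fin.succ).det -
      (A.submatrix (Fin.castSucc : Fin (n + 1) → Fin (n + 2)) Fin.succ).det *
        (A.submatrix (Fin.succ : Fin (n + 1) → Fin (n + 2)) Fin.castSucc).det :=
  dodgson_condensation_field_general n A
end

section
/- The right-hand side of MacMahon's identity satisfies the Dodgson recurrence: defining R_n(a,b) := (a+n)!!·(n-1)!!·(a-b-1)!!·b!! / ( a!!·(a-b+n-1)!!·(b+n)!! ) for natural numbers n ≥ 2 and b < a, one has R_n(a,b) · R_{n-2}(a+1,b+1) = R_{n-1}(a,b)·R_{n-1}(a+1,b+1) − R_{n-1}(a+1,b)·R_{n-1}(a,b+1). -/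
def superfactorial (m : ℕ) : ℕ := ∏ k ∈ Finset.range m, Nat.factorial (k + 1)

/-- `R n a b` is the right-hand side of MacMahon's identity. -/
def R (n a b : ℕ) : ℚ :=
  ((superfactorial (a + n) * superfactorial (n - 1) *
      superfactorial (a - b - 1) * superfactorial b : ℕ) : ℚ) /
    ((superfactorial a * superfactorial (a - b + n - 1) *
      superfactorial (b + n) : ℕ) : ℚ)

/-!
Since `superfactorial (k + 1) = superfactorial k * (k + 1)!`, the ratio of two values of `R` whose arguments differ by
one is a ratio of factorials. Writing `P = R (n-1) a b * R (n-1) (a+1) (b+1)`, this gives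
`R n a b * R (n-2) (a+1) (b+1) = P * (n-1) / (a-b+n-1)` and `R (n-1) (a+1) b * R (n-1) a (b+1) = P * (a-b) / (a-b+n-1)`,
and the two fractions add up to `1`.
-/

open Nat

lemma superfactorial_succ (k : ℕ) : superfactorial (k + 1) = superfactorial k * (k + 1)! := by
  simp [superfactorial, Finset.prod_range_succ]

/-- At `k = 0` truncated subtraction makes this `1 = 1 * 0!`, the convention `(-1)!! = 1`. -/
lemma superfactorial_eq_pred_mul (k : ℕ) : superfactorial k = superfactorial (k - 1) * k ! := by
  cases k with
  | zero => simp [superfactorial]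
  | succ k => simpa using superfactorial_succ k

lemma superfactorial_ne_zero (k : ℕ) : superfactorial k ≠ 0 :=
  Finset.prod_ne_zero_iff.2 fun _ _ => factorial_ne_zero _

lemma R_succ (N a b : ℕ) :
    R (N + 1) a b = R N a b * ((a + N + 1)! * N ! / ((a - b + N)! * (b + N + 1)!)) := by
  simp only [R, ← add_assoc, Nat.add_sub_cancel, superfactorial_succ]
  rw [superfactorial_eq_pred_mul N, superfactorial_eq_pred_mul (a - b + N)]
  push_cast
  field_simp [superfactorial_ne_zero]

lemma R_succ_left (N a b : ℕ) (hba : b ≤ a) :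
    R N (a + 1) b = R N a b * ((a + N + 1)! * (a - b)! / ((a + 1)! * (a - b + N)!)) := by
  have h₁ : a + 1 - b - 1 = a - b := by omega
  have h₂ : a + 1 - b + N - 1 = a - b + N := by omega
  simp only [R, h₁, h₂, Nat.add_right_comm a 1 N, superfactorial_succ]
  rw [superfactorial_eq_pred_mul (a - b), superfactorial_eq_pred_mul (a - b + N)]
  push_cast
  field_simp [superfactorial_ne_zero]

lemma R_succ_succ_mul (N a b : ℕ) :
    R (N + 1 + 1) a b * R N (a + 1) (b + 1) * (a - b + N + 1 : ℕ) =
      R (N + 1) a b * R (N + 1) (a + 1) (b + 1) * (N + 1 : ℕ) := by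
  rw [R_succ (N + 1) a b, R_succ N (a + 1) (b + 1), Nat.add_sub_add_right]
  simp only [← add_assoc, Nat.add_right_comm _ 1 N]
  rw [factorial_succ (a - b + N), factorial_succ N]
  push_cast
  field_simp

lemma R_succ_left_mul_R_succ_right (N a b : ℕ) (hba : b < a) :
    R N (a + 1) b * R N a (b + 1) * (a - b + N : ℕ) =
      R N a b * R N (a + 1) (b + 1) * (a - b : ℕ) := by
  obtain ⟨c, hc⟩ : ∃ c, a - b = c + 1 := ⟨a - b - 1, by omega⟩
  have hc' : a - (b + 1) = c := by omega
  rw [R_succ_left N a b hba.le, R_succ_left N a (b + 1) hba, hc, hc', Nat.add_right_comm c 1 N,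
    factorial_succ c, factorial_succ (c + N)]
  push_cast
  field_simp

theorem macmahon_rhs_dodgson (n a b : ℕ) (hn : 2 ≤ n) (hba : b < a) :
    R n a b * R (n - 2) (a + 1) (b + 1) =
      R (n - 1) a b * R (n - 1) (a + 1) (b + 1) -
        R (n - 1) (a + 1) b * R (n - 1) a (b + 1) := by
  obtain ⟨N, rfl⟩ : ∃ N, n = N + 1 + 1 := ⟨n - 2, by omega⟩
  have h₁ := R_succ_succ_mul N a b
  have h₂ := R_succ_left_mul_R_succ_right (N + 1) a b hba
  push_cast at h₁ h₂
  have hpos : (0 : ℚ) < (a - b : ℕ) + (N + 1) := by positivity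
  simp only [Nat.add_sub_cancel, show N + 1 + 1 - 2 = N by omega]
  apply mul_right_cancel₀ hpos.ne'
  linear_combination h₁ + h₂
end

section
/- Positivity of MacMahon's determinant: for natural numbers a, b, n with b < a, the determinant det[C(a+i, b+j)]_{1≤i,j≤n} is a positive rational (in particular nonzero), being equal to (a+n)!!·(n-1)!!·(a-b-1)!!·b!! / ( a!!·(a-b+n-1)!!·(b+n)!! ), a quotient of products of factorials. -/
open Finset Matrix Nat

/-!
Since `C(m, k + j) (k + j)! (m - k)! = m! (m - k)^(j)` (falling factorial), multiplying row `i`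
by `(a - b + i)!` and column `j` by `(b + j + 1)!` turns the matrix into `(a + i + 1)!` times
`(a - b + i)^(j)`. The falling factorials are monic polynomials of degree `j` evaluated at the
consecutive integers `a - b + i`, so the remaining determinant is the Vandermonde determinant of
`0, …, n - 1`, namely `(n - 1)!!`. The three products of factorials are the ratios
`(a + n)!! / a!!`, `(b + n)!! / b!!` and `(a - b + n - 1)!! / (a - b - 1)!!`.
-/

theorem superfactorial_eq_superFactorial : superfactorial = Nat.superFactorial :=
  funext prod_range_factorial_succ

theorem Nat.superFactorial_pos (n : ℕ) : 0 < n.superFactorial := by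
  rw [← prod_range_factorial_succ]
  exact prod_pos fun k _ => factorial_pos (k + 1)

theorem Nat.superFactorial_add (m n : ℕ) :
    (m + n).superFactorial = m.superFactorial * ∏ j ∈ range n, (m + j + 1)! := by
  simp only [← prod_range_factorial_succ, prod_range_add]

theorem Nat.factorial_mul_factorial_mul_choose_add {m k : ℕ} (hkm : k ≤ m) (j : ℕ) :
    (m - k)! * ((k + j)! * m.choose (k + j)) = m ! * (m - k).descFactorial j := by
  rw [← descFactorial_eq_factorial_mul_choose,
    ← descFactorial_mul_descFactorial (le_add_right k j), add_tsub_cancel_left,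
    mul_left_comm, factorial_mul_descFactorial hkm, mul_comm]

theorem Matrix.det_descPochhammer_eval_add {R : Type*} [CommRing R] [IsDomain R] (x : R)
    (n : ℕ) :
    (of fun i j : Fin n => (descPochhammer R j).eval (x + i)).det = (n - 1).superFactorial := by
  rw [← det_eval_matrixOfPolynomials_eq_det_vandermonde _ _
    (fun j => descPochhammer_natDegree R j) (fun j => monic_descPochhammer R j)]
  rcases n with _ | n
  · simp
  · simp_rw [add_comm x, det_vandermonde_add, det_vandermonde_id_eq_superFactorial,
      add_tsub_cancel_right]

theorem prod_factorial_mul_det_choose {R : Type*} [CommRing R] [IsDomain R] {a b : ℕ}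
    (hba : b ≤ a) (n : ℕ) :
    (∏ i ∈ range n, ((a - b + i)! : R)) * (∏ j ∈ range n, ((b + j + 1)! : R)) *
      (of fun i j : Fin n => ((a + i + 1).choose (b + j + 1) : R)).det =
    (∏ i ∈ range n, ((a + i + 1)! : R)) * (n - 1).superFactorial := by
  have entry (i j : ℕ) : ((a - b + i)! : R) * ((b + j + 1)! * (a + i + 1).choose (b + j + 1)) =
      (a + i + 1)! * (descPochhammer R j).eval (((a - b : ℕ) : R) + i) := by
    have h := factorial_mul_factorial_mul_choose_add (show b + 1 ≤ a + i + 1 by omega) j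
    rw [show a + i + 1 - (b + 1) = a - b + i by omega, add_right_comm] at h
    rw [← Nat.cast_add, descPochhammer_eval_eq_descFactorial]
    exact_mod_cast congrArg (Nat.cast : ℕ → R) h
  rw [← Fin.prod_univ_eq_prod_range (fun i => ((a - b + i)! : R)),
    ← Fin.prod_univ_eq_prod_range (fun j => ((b + j + 1)! : R)),
    ← Fin.prod_univ_eq_prod_range (fun i => ((a + i + 1)! : R)), mul_assoc, ← det_mul_row,
    ← det_mul_column]
  simp only [of_apply, entry]
  rw [← det_descPochhammer_eval_add ((a - b : ℕ) : R) n, ← det_mul_column]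
  rfl

theorem macmahon_det_pos (a b n : ℕ) (hba : b < a) :
    0 < Matrix.det (fun i j : Fin n =>
        ((Nat.choose (a + i + 1) (b + j + 1) : ℕ) : ℚ)) ∧
      Matrix.det (fun i j : Fin n =>
        ((Nat.choose (a + i + 1) (b + j + 1) : ℕ) : ℚ)) =
        ((superfactorial (a + n) * superfactorial (n - 1) *
            superfactorial (a - b - 1) * superfactorial b : ℕ) : ℚ) /
          ((superfactorial a * superfactorial (a - b + n - 1) *
            superfactorial (b + n) : ℕ) : ℚ) := by
  set D := Matrix.det fun i j : Fin n => ((Nat.choose (a + i + 1) (b + j + 1) : ℕ) : ℚ)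
  have key :
      (∏ i ∈ range n, ((a - b + i)! : ℚ)) * (∏ j ∈ range n, ((b + j + 1)! : ℚ)) * D =
      (∏ i ∈ range n, ((a + i + 1)! : ℚ)) * (n - 1).superFactorial :=
    prod_factorial_mul_det_choose hba.le n
  have hgap : (a - b + n - 1).superFactorial =
      (a - b - 1).superFactorial * ∏ j ∈ range n, (a - b + j)! := by
    rw [show a - b + n - 1 = a - b - 1 + n by omega, superFactorial_add]
    congr 2 with j
    congr 1
    omega
  have hsf_pos (m : ℕ) : (0 : ℚ) < m.superFactorial := mod_cast superFactorial_pos m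
  have hden_pos : (0 : ℚ) <
      a.superFactorial * (a - b + n - 1).superFactorial * (b + n).superFactorial :=
    mul_pos (mul_pos (hsf_pos _) (hsf_pos _)) (hsf_pos _)
  simp only [superfactorial_eq_superFactorial, Nat.cast_mul]
  have hD : D = (a + n).superFactorial * (n - 1).superFactorial * (a - b - 1).superFactorial *
        b.superFactorial /
      (a.superFactorial * (a - b + n - 1).superFactorial * (b + n).superFactorial) := by
    rw [eq_div_iff hden_pos.ne', hgap, superFactorial_add a, superFactorial_add b]
    push_cast
    linear_combination
      (a.superFactorial * (a - b - 1).superFactorial * b.superFactorial : ℚ) * key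
  refine ⟨?_, hD⟩
  rw [hD]
  exact div_pos (mul_pos (mul_pos (mul_pos (hsf_pos _) (hsf_pos _)) (hsf_pos _)) (hsf_pos _))
    hden_pos
end

section
/- Polynomial form of Dodgson condensation: for any n×n matrix A (n ≥ 2) over a commutative ring, det(A)·det(A_{n-2}(2,2)) = det(A_{n-1}(1,1))·det(A_{n-1}(2,2)) − det(A_{n-1}(1,2))·det(A_{n-1}(2,1)), where A_r(k,l) denotes the r×r contiguous submatrix of A whose upper-left corner is the entry a_{k,l} (and the determinant of a 0×0 matrix is 1). -/
/-!
Order the indices so that the interior ones come first and the two ends `0`, `last` form a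
border of size two. When the central block `D` is invertible, the Schur complement
`S = A₂₂ - A₂₁ D⁻¹ A₁₂` is a `2 × 2` matrix with `det A = det D * det S`, and each
`(n + 1)`-minor obtained by adding one border row and one border column to `D` equals
`det D * S a b`; so `det A * det D = det D ^ 2 * det S` is the claimed combination of minors.
The identity is polynomial in the entries, so it holds for the generic matrix (whose central
minor is nonzero, hence invertible over the fraction field) and therefore over every
commutative ring. Returning to the order of `Fin (n + 2)` permutes rows and columns of the
off-diagonal minors differently, but the two signs cancel in their product.
-/

open Matrix

namespace Matrix

theorem toBlocks₁₁_map {α β l m n o : Type*} (M : Matrix (n ⊕ o) (l ⊕ m) α) (f : α → β) :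
    (M.map f).toBlocks₁₁ = M.toBlocks₁₁.map f :=
  rfl

theorem det_submatrix_mul_det_submatrix {R ι κ : Type*} [CommRing R] [Fintype ι] [DecidableEq ι]
    [Fintype κ] [DecidableEq κ] (M N : Matrix ι ι R) (e f : κ ≃ ι) :
    (M.submatrix e f).det * (N.submatrix f e).det = M.det * N.det := by
  rw [← det_mul, submatrix_mul_equiv, det_submatrix_equiv_self, det_mul]

variable {R : Type*} [CommRing R] {m k : Type*} [Fintype m] [DecidableEq m]

def borderedMinor (A : Matrix (m ⊕ k) (m ⊕ k) R) (a b : k) : R :=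
  (A.submatrix (Sum.map id fun _ : Unit => a) (Sum.map id fun _ : Unit => b)).det

theorem map_borderedMinor {S : Type*} [CommRing S] (f : R →+* S) (A : Matrix (m ⊕ k) (m ⊕ k) R)
    (a b : k) : f (A.borderedMinor a b) = (A.map f).borderedMinor a b := by
  rw [borderedMinor, borderedMinor, RingHom.map_det, RingHom.mapMatrix_apply, submatrix_map]

theorem borderedMinor_eq_det_toBlocks₁₁_mul (A : Matrix (m ⊕ k) (m ⊕ k) R)
    [Invertible A.toBlocks₁₁] (a b : k) :
    A.borderedMinor a b = A.toBlocks₁₁.det *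
      (A.toBlocks₂₂ - A.toBlocks₂₁ * ⅟A.toBlocks₁₁ * A.toBlocks₁₂) a b := by
  have hblocks : A.submatrix (Sum.map id fun _ : Unit => a) (Sum.map id fun _ : Unit => b) =
      fromBlocks A.toBlocks₁₁ (A.toBlocks₁₂.submatrix id fun _ => b)
        (A.toBlocks₂₁.submatrix (fun _ => a) id) (of fun _ _ => A.toBlocks₂₂ a b) := by
    ext (i | i) (j | j) <;> rfl
  rw [borderedMinor, hblocks, det_fromBlocks₁₁, det_unique (n := Unit)]
  simp [mul_apply]

theorem det_mul_det_toBlocks₁₁_of_invertible (A : Matrix (m ⊕ Fin 2) (m ⊕ Fin 2) R)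
    [Invertible A.toBlocks₁₁] :
    A.det * A.toBlocks₁₁.det = A.borderedMinor 0 0 * A.borderedMinor 1 1 -
      A.borderedMinor 0 1 * A.borderedMinor 1 0 := by
  nth_rw 1 [← fromBlocks_toBlocks A]
  rw [det_fromBlocks₁₁, det_fin_two]
  simp only [borderedMinor_eq_det_toBlocks₁₁_mul]
  ring

theorem det_toBlocks₁₁_mvPolynomialX_ne_zero [Fintype k] [DecidableEq k] [Nontrivial R] :
    (mvPolynomialX (m ⊕ k) (m ⊕ k) R).toBlocks₁₁.det ≠ 0 := by
  intro h
  have h1 := (MvPolynomial.eval fun p => (1 : Matrix (m ⊕ k) (m ⊕ k) R) p.1 p.2).map_det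
    (mvPolynomialX (m ⊕ k) (m ⊕ k) R).toBlocks₁₁
  rw [h, map_zero, RingHom.mapMatrix_apply, ← toBlocks₁₁_map, ← RingHom.mapMatrix_apply,
    mvPolynomialX_mapMatrix_eval, ← fromBlocks_one, toBlocks_fromBlocks₁₁, det_one] at h1
  exact zero_ne_one h1

theorem det_mul_det_toBlocks₁₁_mvPolynomialX :
    let X := mvPolynomialX (m ⊕ Fin 2) (m ⊕ Fin 2) ℤ
    X.det * X.toBlocks₁₁.det = X.borderedMinor 0 0 * X.borderedMinor 1 1 -
      X.borderedMinor 0 1 * X.borderedMinor 1 0 := by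
  intro X
  set f := algebraMap (MvPolynomial ((m ⊕ Fin 2) × (m ⊕ Fin 2)) ℤ)
    (FractionRing (MvPolynomial ((m ⊕ Fin 2) × (m ⊕ Fin 2)) ℤ))
  have hf : Function.Injective f := IsFractionRing.injective _ _
  have : Invertible (X.map f).toBlocks₁₁ := by
    refine invertibleOfIsUnitDet _ ?_
    rw [toBlocks₁₁_map, ← RingHom.mapMatrix_apply, ← RingHom.map_det, isUnit_iff_ne_zero]
    exact (map_ne_zero_iff f hf).mpr det_toBlocks₁₁_mvPolynomialX_ne_zero
  apply hf
  simpa only [map_mul, map_sub, RingHom.map_det, RingHom.mapMatrix_apply, map_borderedMinor,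
    ← toBlocks₁₁_map] using det_mul_det_toBlocks₁₁_of_invertible (X.map f)

theorem det_mul_det_toBlocks₁₁ (A : Matrix (m ⊕ Fin 2) (m ⊕ Fin 2) R) :
    A.det * A.toBlocks₁₁.det = A.borderedMinor 0 0 * A.borderedMinor 1 1 -
      A.borderedMinor 0 1 * A.borderedMinor 1 0 := by
  have h := congr_arg (MvPolynomial.eval₂Hom (Int.castRingHom R) fun p => A p.1 p.2)
    det_mul_det_toBlocks₁₁_mvPolynomialX
  simpa only [map_mul, map_sub, RingHom.map_det, RingHom.mapMatrix_apply, map_borderedMinor,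
    ← toBlocks₁₁_map, MvPolynomial.coe_eval₂Hom, mvPolynomialX_map_eval₂] using h

end Matrix

def finSumUnitEquivSucc (n : ℕ) : Fin n ⊕ Unit ≃ Fin (n + 1) :=
  (Equiv.optionEquivSumPUnit (Fin n)).symm.trans (finSuccEquiv n).symm

def finSumUnitEquivCastSucc (n : ℕ) : Fin n ⊕ Unit ≃ Fin (n + 1) :=
  (Equiv.optionEquivSumPUnit (Fin n)).symm.trans finSuccEquivLast.symm

def finSumFinTwoEquiv (n : ℕ) : Fin n ⊕ Fin 2 ≃ Fin (n + 2) where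
  toFun := Sum.elim (fun j => j.succ.castSucc) ![0, Fin.last (n + 1)]
  invFun := Fin.cases (Sum.inr 0) (Fin.lastCases (Sum.inr 1) Sum.inl)
  left_inv := by
    rintro (j | i)
    · simp
    · fin_cases i <;> simp [← Fin.succ_last]
  right_inv := by
    intro k
    induction k using Fin.cases with
    | zero => rfl
    | succ k =>
      induction k using Fin.lastCases with
      | last => simp [-Fin.succ_last]; rfl
      | cast j => simp

theorem finSumFinTwoEquiv_comp_sumMap_zero (n : ℕ) :
    finSumFinTwoEquiv n ∘ Sum.map id (fun _ : Unit => 0) =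
      Fin.castSucc ∘ finSumUnitEquivSucc n := by
  funext x
  rcases x with j | _ <;> simp [finSumFinTwoEquiv, finSumUnitEquivSucc]

theorem finSumFinTwoEquiv_comp_sumMap_one (n : ℕ) :
    finSumFinTwoEquiv n ∘ Sum.map id (fun _ : Unit => 1) =
      Fin.succ ∘ finSumUnitEquivCastSucc n := by
  funext x
  rcases x with j | _ <;> simp [finSumFinTwoEquiv, finSumUnitEquivCastSucc]

theorem dodgson_condensation_comm_ring {R : Type*} [CommRing R] (n : ℕ)
    (A : Matrix (Fin (n + 2)) (Fin (n + 2)) R) :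
    A.det * (A.submatrix (fun i : Fin n => i.succ.castSucc)
        (fun j : Fin n => j.succ.castSucc)).det =
      (A.submatrix (Fin.castSucc : Fin (n + 1) → Fin (n + 2)) Fin.castSucc).det *
        (A.submatrix (Fin.succ : Fin (n + 1) → Fin (n + 2)) Fin.succ).det -
      (A.submatrix (Fin.castSucc : Fin (n + 1) → Fin (n + 2)) Fin.succ).det *
        (A.submatrix (Fin.succ : Fin (n + 1) → Fin (n + 2)) Fin.castSucc).det := by
  set w := finSumFinTwoEquiv n
  set B := A.submatrix w w
  have h00 : B.borderedMinor 0 0 = (A.submatrix Fin.castSucc Fin.castSucc).det := by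
    rw [borderedMinor, submatrix_submatrix, finSumFinTwoEquiv_comp_sumMap_zero,
      ← submatrix_submatrix, det_submatrix_equiv_self]
  have h11 : B.borderedMinor 1 1 = (A.submatrix Fin.succ Fin.succ).det := by
    rw [borderedMinor, submatrix_submatrix, finSumFinTwoEquiv_comp_sumMap_one,
      ← submatrix_submatrix, det_submatrix_equiv_self]
  have h01 : B.borderedMinor 0 1 * B.borderedMinor 1 0 =
      (A.submatrix Fin.castSucc Fin.succ).det * (A.submatrix Fin.succ Fin.castSucc).det := by
    rw [borderedMinor, borderedMinor, submatrix_submatrix, submatrix_submatrix,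
      finSumFinTwoEquiv_comp_sumMap_zero, finSumFinTwoEquiv_comp_sumMap_one,
      ← submatrix_submatrix, ← submatrix_submatrix, det_submatrix_mul_det_submatrix]
  rw [← det_submatrix_equiv_self w A, ← h00, ← h11, ← h01]
  exact det_mul_det_toBlocks₁₁ B
end
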